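/- Let M₁, M₂ ∈ ℝ^{k×k} and σ < 0 be such that every complex eigenvalue of M₂ has real part < σ and every complex eigenvalue of M₁ has real part in (σ, 0), and let K ∈ ℝ^{k×k} be invertible. Then there exists τ* > 0 such that for every τ ∈ (0, τ*) the matrix K − exp(τ M₂) · K · exp(−τ M₁) is invertible. -/

import Mathlib

/-!
The function `g τ = det (K - exp (τ M₂) K exp (-τ M₁))` is real-analytic and vanishes at `0`, so
its zeros near `0` are isolated unless `g ≡ 0`. To rule that out, look at `τ = N ∈ ℕ`: over `ℂ`
the subtracted term is `Aᴺ K Bᴺ` with `A = exp M₂`, `B = exp (-M₁)`. Every eigenvalue of `exp M`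
is `exp` of an eigenvalue of `M`, so `ρ(A) < e^σ` and `ρ(B) < e^(-σ)`; by Gelfand's formula
`‖Aᴺ‖ ‖Bᴺ‖` decays geometrically, hence `Aᴺ K Bᴺ → 0`, and `K - Aᴺ K Bᴺ` is invertible for large
`N` because the units form an open set.
-/

open NormedSpace Filter Topology

attribute [local instance] Matrix.linftyOpNormedAddCommGroup Matrix.linftyOpNormedSpace
  Matrix.linftyOpNormedRing Matrix.linftyOpNormedAlgebra

namespace Matrix

variable {n : Type*} [Fintype n] [DecidableEq n]

theorem mem_spectrum_map_iff_mem_roots_charpoly_map {K L : Type*} [Field K] [Field L]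
    (f : K →+* L) {A : Matrix n n K} {μ : L} :
    μ ∈ spectrum L (A.map f) ↔ μ ∈ (A.charpoly.map f).roots := by
  rw [← charpoly_map, mem_spectrum_iff_isRoot_charpoly,
    Polynomial.mem_roots (charpoly_monic _).ne_zero]

theorem det_ne_zero_of_isUnit_map {K L : Type*} [CommRing K] [CommRing L] [Nontrivial L]
    (f : K →+* L) {A : Matrix n n K} (h : IsUnit (A.map f)) : A.det ≠ 0 := by
  intro h0
  rw [isUnit_iff_isUnit_det, ← RingHom.mapMatrix_apply, ← RingHom.map_det, h0, map_zero] at h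
  exact not_isUnit_zero h

theorem exp_mulVec_of_mulVec_eq_smul {𝕂 : Type*} [RCLike 𝕂] {A : Matrix n n 𝕂} {c : 𝕂}
    {v : n → 𝕂} (h : A *ᵥ v = c • v) : exp A *ᵥ v = exp c • v := by
  have hpow : ∀ m : ℕ, A ^ m *ᵥ v = c ^ m • v := by
    intro m
    induction m with
    | zero => simp
    | succ m ih => rw [pow_succ', ← mulVec_mulVec, ih, mulVec_smul, h, smul_smul, pow_succ]
  have hA := (exp_series_hasSum_exp' (𝕂 := 𝕂) A).map (mulVec.addMonoidHomLeft v)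
    (Continuous.matrix_mulVec continuous_id continuous_const)
  have hc := (exp_series_hasSum_exp' (𝕂 := 𝕂) c).smul_const v
  refine hA.unique ?_
  convert hc using 2 with m
  change ((m.factorial : 𝕂)⁻¹ • A ^ m) *ᵥ v = _
  rw [smul_mulVec, hpow, smul_smul, smul_eq_mul]

theorem exists_exp_eq_of_mem_spectrum_exp {A : Matrix n n ℂ} {μ : ℂ}
    (hμ : μ ∈ spectrum ℂ (exp A)) : ∃ c ∈ spectrum ℂ A, Complex.exp c = μ := by
  -- `A` commutes with `exp A`, so it has an eigenvector `w` inside the `μ`-eigenspace of `exp A`;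
  -- then `exp c • w = exp A *ᵥ w = μ • w`.
  have hcomm : Commute (toLin' (exp A)) (toLin' A) :=
    ((Commute.refl A).exp_left).map toLinAlgEquiv'
  have hmaps := Module.End.mapsTo_genEigenspace_of_comm hcomm μ 1
  have : Nontrivial (Module.End.eigenspace (toLin' (exp A)) μ) := by
    rw [Submodule.nontrivial_iff_ne_bot]
    exact Module.End.hasEigenvalue_iff_mem_spectrum.mpr (by rwa [spectrum_toLin'])
  obtain ⟨c, hc⟩ := Module.End.exists_eigenvalue ((toLin' A).restrict hmaps)
  obtain ⟨⟨w, hwμ⟩, hw⟩ := hc.exists_hasEigenvector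
  have hw0 : w ≠ 0 := fun h => hw.2 (Subtype.ext h)
  have hAw : A *ᵥ w = c • w := congrArg Subtype.val hw.apply_eq_smul
  have hEw : exp A *ᵥ w = μ • w := by
    simpa using Module.End.mem_eigenspace_iff.mp hwμ
  refine ⟨c, ?_, smul_left_injective ℂ hw0 ?_⟩
  · rw [← spectrum_toLin', ← Module.End.hasEigenvalue_iff_mem_spectrum]
    exact Module.End.hasEigenvalue_of_hasEigenvector ⟨by simpa using hAw, hw0⟩
  · change Complex.exp c • w = μ • w
    rw [Complex.exp_eq_exp_ℂ, ← exp_mulVec_of_mulVec_eq_smul hAw, hEw]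

theorem spectralRadius_exp_lt {A : Matrix n n ℂ} {s : ℝ} (h : ∀ c ∈ spectrum ℂ A, c.re < s) :
    spectralRadius ℂ (exp A) < ENNReal.ofReal (Real.exp s) := by
  rcases subsingleton_or_nontrivial (Matrix n n ℂ) with _ | _
  · simp [spectralRadius, spectrum.of_subsingleton, Real.exp_pos]
  refine spectrum.spectralRadius_lt_of_forall_lt _ fun μ hμ => ?_
  obtain ⟨c, hc, rfl⟩ := exists_exp_eq_of_mem_spectrum_exp hμ
  rw [← NNReal.coe_lt_coe, coe_nnnorm, Complex.norm_exp, Real.coe_toNNReal _ (Real.exp_pos s).le]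
  exact Real.exp_lt_exp.mpr (h c hc)

end Matrix

section BanachAlgebra

variable {A : Type*} [NormedRing A] [NormedAlgebra ℂ A] [CompleteSpace A]

theorem eventually_norm_pow_le_pow_of_spectralRadius_lt {a : A} {r : ℝ}
    (h : spectralRadius ℂ a < ENNReal.ofReal r) : ∀ᶠ m : ℕ in atTop, ‖a ^ m‖ ≤ r ^ m := by
  have gelfand := spectrum.pow_norm_pow_one_div_tendsto_nhds_spectralRadius a
  filter_upwards [gelfand.eventually_lt_const h, eventually_ne_atTop 0] with m hm hm0
  have hr : 0 < r := ENNReal.ofReal_pos.mp (bot_le.trans_lt hm)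
  have hlt := (ENNReal.ofReal_lt_ofReal_iff hr).mp hm
  calc ‖a ^ m‖ = (‖a ^ m‖ ^ (1 / m : ℝ)) ^ m := by
        rw [one_div, Real.rpow_inv_natCast_pow (norm_nonneg _) hm0]
    _ ≤ r ^ m := by gcongr

theorem tendsto_pow_mul_mul_pow_nhds_zero {a b : A} {s : ℝ}
    (ha : spectralRadius ℂ a < ENNReal.ofReal s) (hb : spectralRadius ℂ b < ENNReal.ofReal s⁻¹)
    (c : A) :
    Tendsto (fun m : ℕ => a ^ m * c * b ^ m) atTop (𝓝 0) := by
  obtain ⟨r, hr0, har, hrs⟩ := ENNReal.lt_iff_exists_real_btwn.mp ha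
  obtain ⟨q, hq0, hbq, hqs⟩ := ENNReal.lt_iff_exists_real_btwn.mp hb
  have hs : 0 < s := ENNReal.ofReal_pos.mp (bot_le.trans_lt ha)
  have hrq : r * q < 1 := by
    rw [ENNReal.ofReal_lt_ofReal_iff hs] at hrs
    rw [ENNReal.ofReal_lt_ofReal_iff (inv_pos.mpr hs)] at hqs
    calc r * q ≤ r * s⁻¹ := by gcongr
      _ < s * s⁻¹ := by gcongr
      _ = 1 := mul_inv_cancel₀ hs.ne'
  have hbound : ∀ᶠ m : ℕ in atTop, ‖a ^ m * c * b ^ m‖ ≤ (r * q) ^ m * ‖c‖ := by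
    filter_upwards [eventually_norm_pow_le_pow_of_spectralRadius_lt har,
      eventually_norm_pow_le_pow_of_spectralRadius_lt hbq] with m ham hbm
    calc ‖a ^ m * c * b ^ m‖ ≤ ‖a ^ m‖ * ‖c‖ * ‖b ^ m‖ := norm_mul₃_le
      _ ≤ r ^ m * ‖c‖ * q ^ m := by gcongr
      _ = (r * q) ^ m * ‖c‖ := by ring
  refine squeeze_zero_norm' hbound ?_
  simpa using (tendsto_pow_atTop_nhds_zero_of_lt_one (by positivity) hrq).mul_const ‖c‖

theorem eventually_isUnit_sub_pow_mul_mul_pow {a b c : A} {s : ℝ}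
    (ha : spectralRadius ℂ a < ENNReal.ofReal s) (hb : spectralRadius ℂ b < ENNReal.ofReal s⁻¹)
    (hc : IsUnit c) : ∀ᶠ m : ℕ in atTop, IsUnit (c - a ^ m * c * b ^ m) := by
  have hlim := (tendsto_pow_mul_mul_pow_nhds_zero ha hb c).const_sub c
  rw [sub_zero] at hlim
  exact hlim.eventually_mem (Units.isOpen.mem_nhds hc)

end BanachAlgebra

theorem analyticAt_exp_smul {𝕂 𝔸 : Type*} [RCLike 𝕂] [NormedRing 𝔸] [NormedAlgebra 𝕂 𝔸]
    [CompleteSpace 𝔸] (x : 𝔸) (t : 𝕂) : AnalyticAt 𝕂 (fun t : 𝕂 => exp (t • x)) t :=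
  (exp_analytic (𝕂 := 𝕂) (t • x)).comp (f := fun t : 𝕂 => t • x)
    ((ContinuousLinearMap.toSpanSingleton 𝕂 x).analyticAt t)

theorem Matrix.analyticAt_det {n 𝕜 : Type*} [Fintype n] [DecidableEq n]
    [NontriviallyNormedField 𝕜] [CompleteSpace 𝕜] (M : Matrix n n 𝕜) :
    AnalyticAt 𝕜 (fun M : Matrix n n 𝕜 => M.det) M := by
  simp_rw [Matrix.det_apply']
  refine Finset.analyticAt_fun_sum _ fun p _ => analyticAt_const.mul ?_
  refine Finset.analyticAt_fun_prod _ fun i _ => ?_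
  exact (LinearMap.toContinuousLinearMap (Matrix.entryLinearMap 𝕜 𝕜 (p i) i)).analyticAt M

theorem AnalyticOnNhd.eventually_ne_zero_of_ne_zero {𝕜 E : Type*} [NontriviallyNormedField 𝕜]
    [PreconnectedSpace 𝕜] [NormedAddCommGroup E] [NormedSpace 𝕜 E] {f : 𝕜 → E}
    (hf : AnalyticOnNhd 𝕜 f Set.univ) {x : 𝕜} (hx : f x ≠ 0) (z : 𝕜) :
    ∀ᶠ y in 𝓝[≠] z, f y ≠ 0 := by
  refine (hf z trivial).eventually_eq_zero_or_eventually_ne_zero.resolve_left fun hz => hx ?_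
  exact hf.eqOn_zero_of_preconnected_of_eventuallyEq_zero isPreconnected_univ (Set.mem_univ z) hz
    (Set.mem_univ x)

theorem stmt19_general {k : ℕ} (M1 M2 K : Matrix (Fin k) (Fin k) ℝ) (σ : ℝ)
    (hM2 : ∀ μ ∈ (M2.charpoly.map (algebraMap ℝ ℂ)).roots, μ.re < σ)
    (hM1 : ∀ ν ∈ (M1.charpoly.map (algebraMap ℝ ℂ)).roots, σ < ν.re ∧ ν.re < 0)
    (hK : IsUnit K) :
    ∃ τs : ℝ, 0 < τs ∧ ∀ τ : ℝ, 0 < τ → τ < τs →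
      IsUnit (K - NormedSpace.exp (τ • M2) * K * NormedSpace.exp (-(τ • M1))) := by
  set φ := (algebraMap ℝ ℂ).mapMatrix (m := Fin k)
  have hφexp : ∀ M, φ (exp M) = exp (φ M) :=
    map_exp φ (continuous_id.matrix_map Complex.continuous_ofReal)
  have hρ2 : spectralRadius ℂ (exp (φ M2)) < ENNReal.ofReal (Real.exp σ) :=
    Matrix.spectralRadius_exp_lt fun c hc =>
      hM2 c ((Matrix.mem_spectrum_map_iff_mem_roots_charpoly_map _).mp hc)
  have hρ1 : spectralRadius ℂ (exp (-φ M1)) < ENNReal.ofReal (Real.exp σ)⁻¹ := by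
    rw [← Real.exp_neg]
    refine Matrix.spectralRadius_exp_lt fun c hc => ?_
    rw [← spectrum.neg_eq, Set.mem_neg] at hc
    have := (hM1 (-c) ((Matrix.mem_spectrum_map_iff_mem_roots_charpoly_map _).mp hc)).1
    rw [Complex.neg_re] at this
    linarith
  obtain ⟨N, hN⟩ := (eventually_isUnit_sub_pow_mul_mul_pow hρ2 hρ1 (hK.map φ)).exists
  set g : ℝ → ℝ := fun τ => (K - exp (τ • M2) * K * exp (τ • -M1)).det
  have hgN : g N ≠ 0 := by
    refine Matrix.det_ne_zero_of_isUnit_map (algebraMap ℝ ℂ) ?_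
    convert hN using 1
    simp only [← RingHom.mapMatrix_apply, Nat.cast_smul_eq_nsmul, Matrix.exp_nsmul, map_sub,
      map_mul, map_pow, hφexp, map_neg, φ]
  have hg : AnalyticOnNhd ℝ g Set.univ := fun τ _ =>
    (Matrix.analyticAt_det _).comp (analyticAt_const.sub
      (((analyticAt_exp_smul M2 τ).mul analyticAt_const).mul (analyticAt_exp_smul (-M1) τ)))
  obtain ⟨ε, hε, hsub⟩ := mem_nhdsGT_iff_exists_Ioo_subset.mp
    (nhdsGT_le_nhdsNE 0 (hg.eventually_ne_zero_of_ne_zero hgN 0))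
  refine ⟨ε, hε, fun τ hτ hτε => ?_⟩
  rw [Matrix.isUnit_iff_isUnit_det, isUnit_iff_ne_zero, ← smul_neg]
  exact hsub ⟨hτ, hτε⟩

/-- If every complex eigenvalue of `M₂` has real part `< σ`, every complex
eigenvalue of `M₁` has real part in `(σ, 0)` (with `σ < 0`), and `K` is invertible, then
there is `τ* > 0` such that `K − exp(τM₂) K exp(−τM₁)` is invertible for all `τ ∈ (0, τ*)`. -/
theorem stmt19 {k : ℕ} (M1 M2 K : Matrix (Fin k) (Fin k) ℝ) (σ : ℝ) (hσ : σ < 0)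
    (hM2 : ∀ μ ∈ (M2.charpoly.map (algebraMap ℝ ℂ)).roots, μ.re < σ)
    (hM1 : ∀ ν ∈ (M1.charpoly.map (algebraMap ℝ ℂ)).roots, σ < ν.re ∧ ν.re < 0)
    (hK : IsUnit K) :
    ∃ τs : ℝ, 0 < τs ∧ ∀ τ : ℝ, 0 < τ → τ < τs →
      IsUnit (K - NormedSpace.exp (τ • M2) * K * NormedSpace.exp (-(τ • M1))) :=
  stmt19_general M1 M2 K σ hM2 hM1 hK
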